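/- Suppose smooth functions (ρ ≥ 0, f ≥ 0, u, p) solve on [0,t] × 𝕋³ (× ℝ³ for f) the system: ∇_x·u = 0; ∂_t ρ + ∇_x·(ρ u) = ∫ f dξ; ∂_t f + ξ·∇_x f + ∇_ξ·[(u−ξ)f] = −f; (1+ρ)[∂_t u + ∇_x·(u⊗u)] + ∇_x p − Δ_x u = 2∫(ξ−u) f dξ. Then the energy identity holds: (1/2)[M₂f(t) + ‖√(1+ρ(t)) u(t)‖²_{L²}] + ∫₀ᵗ ‖∇_x u‖²_{L²} ds + (3/2)∫₀ᵗ ∫∫ |u−ξ|² f dξ dx ds = (1/2)[M₂f(0) + ‖√(1+ρ(0)) u(0)‖²_{L²}]. -/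

import Mathlib

open MeasureTheory Filter intervalIntegral Metric
open scoped ENNReal NNReal

noncomputable def pd (g : (Fin 3 → ℝ) → ℝ) (i : Fin 3) (x : Fin 3 → ℝ) : ℝ :=
  fderiv ℝ g x (Pi.single i 1)

def D3 : Set (Fin 3 → ℝ) := Set.univ.pi fun _ => Set.Ico (0:ℝ) 1

abbrev X3 := Fin 3 → ℝ

lemma one_le_tn : ((⊤:ℕ∞) : WithTop ℕ∞) ≠ 0 := by simp

lemma insertNth_shift (i : Fin 3) (c : ℝ) (y : Fin 2 → ℝ) :
    (Fin.insertNth (α := fun _ : Fin 3 => ℝ) i c y)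
      = Fin.insertNth (α := fun _ : Fin 3 => ℝ) i 0 y + c • (Pi.single i 1 : X3) := by
  funext j
  refine Fin.succAboveCases i ?_ ?_ j
  · simp
  · intro l
    simp [Fin.insertNth_apply_succAbove, Pi.single_eq_of_ne (Fin.succAbove_ne i l)]

lemma box_pd (a b : Fin 3 → ℝ) (hle : a ≤ b) (g : X3 → ℝ) (hg : ContDiff ℝ (⊤:ℕ∞) g)
    (i : Fin 3) :
    ∫ x in Set.Icc a b, pd g i x =
      (∫ y in Set.Icc (a ∘ i.succAbove) (b ∘ i.succAbove), g (i.insertNth (b i) y)) -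
        ∫ y in Set.Icc (a ∘ i.succAbove) (b ∘ i.succAbove), g (i.insertNth (a i) y) := by
  have hdiff : Differentiable ℝ g := hg.differentiable one_le_tn
  have H := MeasureTheory.integral_divergence_of_hasFDerivAt_off_countable'
    (a := a) (b := b) hle
    (f := fun j => if j = i then g else fun _ => 0)
    (f' := fun j x => if j = i then fderiv ℝ g x else 0)
    ∅ Set.countable_empty ?_ ?_ ?_
  · have h1 : (fun x => ∑ j, (if j = i then fderiv ℝ g x else 0) (Pi.single j 1))
        = fun x => pd g i x := by
      funext x
      rw [Finset.sum_eq_single i] <;> simp +contextual [pd]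
    rw [h1] at H
    rw [H, Finset.sum_eq_single i] <;> simp +contextual
  · intro j
    by_cases h : j = i <;> simp [h, hg.continuous.continuousOn, continuousOn_const]
  · intro x _ j
    by_cases h : j = i <;>
      simp [h, (hdiff x).hasFDerivAt, hasFDerivAt_const]
  · have h1 : (fun x => ∑ j, (if j = i then fderiv ℝ g x else 0) (Pi.single j 1))
        = fun x => pd g i x := by
      funext x
      rw [Finset.sum_eq_single i] <;> simp +contextual [pd]
    rw [h1]
    exact ((hg.continuous_fderiv one_le_tn).clm_apply
      continuous_const).continuousOn.integrableOn_compact isCompact_Icc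

lemma D3_ae_Icc : D3 =ᵐ[(volume : Measure X3)] Set.Icc (0 : X3) 1 := by
  have := MeasureTheory.Measure.univ_pi_Ico_ae_eq_Icc
    (μ := fun _ : Fin 3 => (volume : Measure ℝ)) (f := fun _ : Fin 3 => (0:ℝ)) (g := fun _ => 1)
  rw [MeasureTheory.volume_pi]
  exact this

lemma torus_IBP (g : X3 → ℝ) (hg : ContDiff ℝ (⊤:ℕ∞) g)
    (hper : ∀ x (k : Fin 3 → ℤ), g (x + fun i => (k i : ℝ)) = g x) (i : Fin 3) :
    ∫ x in D3, pd g i x = 0 := by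
  rw [setIntegral_congr_set D3_ae_Icc,
    box_pd 0 1 (by intro j; norm_num) g hg i]
  have key : ∀ y : Fin 2 → ℝ, g (i.insertNth ((1:X3) i) y) = g (i.insertNth ((0:X3) i) y) := by
    intro y
    have h1 : (Fin.insertNth (α := fun _ : Fin 3 => ℝ) i ((1:X3) i) y)
        = Fin.insertNth (α := fun _ : Fin 3 => ℝ) i 0 y
            + fun j => ((Pi.single i (1:ℤ) : Fin 3 → ℤ) j : ℝ) := by
      rw [show ((1:X3) i) = (1:ℝ) from rfl, insertNth_shift]
      congr 1
      funext j
      by_cases h : j = i <;> simp [h, Pi.single_apply]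
    have h0 : (Fin.insertNth (α := fun _ : Fin 3 => ℝ) i ((0:X3) i) y)
        = Fin.insertNth (α := fun _ : Fin 3 => ℝ) i 0 y := by norm_num
    rw [h1, h0, hper]
  simp only [key, sub_self]

lemma pd_eq_zero_of_far (g : X3 → ℝ) (R : ℝ) (hsupp : ∀ ξ, R ≤ ‖ξ‖ → g ξ = 0)
    (i : Fin 3) {ξ : X3} (hξ : R < ‖ξ‖) : pd g i ξ = 0 := by
  have hev : g =ᶠ[nhds ξ] (fun _ => (0:ℝ)) := by
    have : IsOpen {x : X3 | R < ‖x‖} := isOpen_lt continuous_const continuous_norm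
    filter_upwards [this.mem_nhds hξ] with x hx
    exact hsupp x hx.le
  unfold pd
  rw [hev.fderiv_eq, fderiv_fun_const]
  simp

lemma rn_IBP (g : X3 → ℝ) (hg : ContDiff ℝ (⊤:ℕ∞) g) (R : ℝ)
    (hsupp : ∀ ξ, R ≤ ‖ξ‖ → g ξ = 0) (i : Fin 3) : ∫ ξ, pd g i ξ = 0 := by
  set M : ℝ := max R 0 + 1 with hMdef
  have hRM : R < M := lt_of_le_of_lt (le_max_left _ _) (lt_add_one _)
  have hM0 : 0 < M := lt_of_le_of_lt (le_max_right _ _) (lt_add_one _)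
  have habs : ∀ (x : X3) (j : Fin 3), M < |x j| → R < ‖x‖ := by
    intro x j h
    have := norm_le_pi_norm x j
    rw [Real.norm_eq_abs] at this
    linarith
  have h1 : ∫ ξ, pd g i ξ
      = ∫ ξ in Set.Icc (fun _ => -M) (fun _ => M : X3), pd g i ξ := by
    refine (setIntegral_eq_integral_of_forall_compl_eq_zero ?_).symm
    intro x hx
    rw [Set.mem_Icc] at hx
    have : ∃ j, ¬((-M ≤ x j) ∧ x j ≤ M) := by
      by_contra h
      push_neg at h
      exact hx ⟨fun j => (h j).1, fun j => (h j).2⟩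
    obtain ⟨j, hj⟩ := this
    have hMx : M < |x j| := by
      rcases not_and_or.1 hj with h | h
      · push_neg at h
        have := neg_abs_le (x j)
        linarith
      · push_neg at h
        have := le_abs_self (x j)
        linarith
    exact pd_eq_zero_of_far g R hsupp i (habs x j hMx)
  have hface : ∀ (c : ℝ), |c| = M → ∀ y : Fin 2 → ℝ,
      g (Fin.insertNth (α := fun _ : Fin 3 => ℝ) i c y) = 0 := by
    intro c hc y
    apply hsupp
    have h1 : |c| ≤ ‖Fin.insertNth (α := fun _ : Fin 3 => ℝ) i c y‖ := by
      have := norm_le_pi_norm (Fin.insertNth (α := fun _ : Fin 3 => ℝ) i c y) i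
      rwa [Fin.insertNth_apply_same, Real.norm_eq_abs] at this
    linarith [hRM, hc ▸ h1]
  rw [h1, box_pd _ _ (by intro j; dsimp; linarith) g hg i]
  have e1 := hface M (abs_of_pos hM0)
  have e2 := hface (-M) (by rw [abs_neg, abs_of_pos hM0])
  simp only [e1, e2, integral_zero, sub_self]

section slices

variable {E F : Type*} [NormedAddCommGroup E] [NormedSpace ℝ E]
  [NormedAddCommGroup F] [NormedSpace ℝ F]

lemma hasFDerivAt_affine_comp (g : E → ℝ) (hg : Differentiable ℝ g) (c : E)
    (L : F →L[ℝ] E) (z : F) :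
    HasFDerivAt (fun w => g (c + L w)) ((fderiv ℝ g (c + L z)).comp L) z :=
  (hg (c + L z)).hasFDerivAt.comp z (L.hasFDerivAt.const_add c)

lemma contDiff_affine_comp (g : E → ℝ) (hg : ContDiff ℝ (⊤:ℕ∞) g) (c : E)
    (L : F →L[ℝ] E) :
    ContDiff ℝ (⊤:ℕ∞) (fun w => g (c + L w)) :=
  hg.comp (contDiff_const.add L.contDiff)

end slices

section two

variable (G : ℝ × X3 → ℝ)

lemma eq_slice_x2 (t : ℝ) : (fun y => G (t, y))
    = fun y => G ((t, 0) + ContinuousLinearMap.inr ℝ ℝ X3 y) := by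
  funext y; simp

lemma eq_slice_t2 (x : X3) : (fun τ => G (τ, x))
    = fun τ => G ((0, x) + ContinuousLinearMap.inl ℝ ℝ X3 τ) := by
  funext τ; simp

variable (hG : ContDiff ℝ (⊤:ℕ∞) G)
include hG

lemma contDiff_slice_x2 (t : ℝ) : ContDiff ℝ (⊤:ℕ∞) (fun y => G (t, y)) := by
  rw [eq_slice_x2]; exact contDiff_affine_comp G hG _ _

lemma hasFDerivAt_slice_x2 (t : ℝ) (x : X3) :
    HasFDerivAt (fun y => G (t, y))
      ((fderiv ℝ G (t, x)).comp (ContinuousLinearMap.inr ℝ ℝ X3)) x := by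
  rw [eq_slice_x2]
  have := hasFDerivAt_affine_comp G (hG.differentiable one_le_tn) (t, 0)
    (ContinuousLinearMap.inr ℝ ℝ X3) x
  simpa using this

lemma diffAt_slice_x2 (t : ℝ) (x : X3) : DifferentiableAt ℝ (fun y => G (t, y)) x :=
  (hasFDerivAt_slice_x2 G hG t x).differentiableAt

lemma pd_slice_x2 (t : ℝ) (x : X3) (i : Fin 3) :
    pd (fun y => G (t, y)) i x = fderiv ℝ G (t, x) (0, Pi.single i 1) := by
  unfold pd
  rw [(hasFDerivAt_slice_x2 G hG t x).fderiv]
  simp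

lemma hasDerivAt_slice_t2 (t : ℝ) (x : X3) :
    HasDerivAt (fun τ => G (τ, x)) (fderiv ℝ G (t, x) (1, 0)) t := by
  rw [eq_slice_t2]
  have := (hasFDerivAt_affine_comp G (hG.differentiable one_le_tn) (0, x)
    (ContinuousLinearMap.inl ℝ ℝ X3) t).hasDerivAt
  simpa using this

lemma deriv_slice_t2 (t : ℝ) (x : X3) :
    deriv (fun τ => G (τ, x)) t = fderiv ℝ G (t, x) (1, 0) :=
  (hasDerivAt_slice_t2 G hG t x).deriv

lemma cont_fderiv_app_2 (v : ℝ × X3) :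
    Continuous (fun q : ℝ × X3 => fderiv ℝ G q v) :=
  (hG.continuous_fderiv one_le_tn).clm_apply continuous_const

lemma contDiff_fderiv_app_2 (v : ℝ × X3) :
    ContDiff ℝ (⊤:ℕ∞) (fun q : ℝ × X3 => fderiv ℝ G q v) := by
  have h1 : ContDiff ℝ (⊤:ℕ∞) (fderiv ℝ G) := by
    have := hG.fderiv_right (m := (⊤:ℕ∞)) (by exact_mod_cast le_top)
    exact this
  exact h1.clm_apply contDiff_const

end two

section three

variable (G : ℝ × (X3 × X3) → ℝ)

lemma eq_slice_x3 (t : ℝ) (ξ : X3) : (fun y => G (t, y, ξ))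
    = fun y => G ((t, 0, ξ) + (ContinuousLinearMap.inr ℝ ℝ (X3 × X3)).comp
        (ContinuousLinearMap.inl ℝ X3 X3) y) := by
  funext y; simp

lemma eq_slice_v3 (t : ℝ) (x : X3) : (fun ζ => G (t, x, ζ))
    = fun ζ => G ((t, x, 0) + (ContinuousLinearMap.inr ℝ ℝ (X3 × X3)).comp
        (ContinuousLinearMap.inr ℝ X3 X3) ζ) := by
  funext ζ; simp

lemma eq_slice_t3 (x ξ : X3) : (fun τ => G (τ, x, ξ))
    = fun τ => G ((0, x, ξ) + ContinuousLinearMap.inl ℝ ℝ (X3 × X3) τ) := by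
  funext τ; simp

lemma eq_slice_z3 (t : ℝ) : (fun z : X3 × X3 => G (t, z))
    = fun z => G ((t, 0, 0) + ContinuousLinearMap.inr ℝ ℝ (X3 × X3) z) := by
  funext z; simp [Prod.mk_zero_zero]

variable (hG : ContDiff ℝ (⊤:ℕ∞) G)
include hG

lemma contDiff_slice_x3 (t : ℝ) (ξ : X3) : ContDiff ℝ (⊤:ℕ∞) (fun y => G (t, y, ξ)) := by
  rw [eq_slice_x3]; exact contDiff_affine_comp G hG _ _

lemma contDiff_slice_v3 (t : ℝ) (x : X3) : ContDiff ℝ (⊤:ℕ∞) (fun ζ => G (t, x, ζ)) := by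
  rw [eq_slice_v3]; exact contDiff_affine_comp G hG _ _

lemma contDiff_slice_z3 (t : ℝ) : ContDiff ℝ (⊤:ℕ∞) (fun z : X3 × X3 => G (t, z)) := by
  rw [eq_slice_z3]; exact contDiff_affine_comp G hG _ _

lemma pd_slice_x3 (t : ℝ) (x ξ : X3) (i : Fin 3) :
    pd (fun y => G (t, y, ξ)) i x = fderiv ℝ G (t, x, ξ) (0, Pi.single i 1, 0) := by
  unfold pd
  have h := hasFDerivAt_affine_comp G (hG.differentiable one_le_tn) (t, 0, ξ)
    ((ContinuousLinearMap.inr ℝ ℝ (X3 × X3)).comp (ContinuousLinearMap.inl ℝ X3 X3)) x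
  have h2 : HasFDerivAt (fun y => G (t, y, ξ))
      ((fderiv ℝ G (t, x, ξ)).comp ((ContinuousLinearMap.inr ℝ ℝ (X3 × X3)).comp
        (ContinuousLinearMap.inl ℝ X3 X3))) x := by
    rw [eq_slice_x3]
    simpa using h
  rw [h2.fderiv]
  simp

lemma pd_slice_v3 (t : ℝ) (x ξ : X3) (i : Fin 3) :
    pd (fun ζ => G (t, x, ζ)) i ξ = fderiv ℝ G (t, x, ξ) (0, 0, Pi.single i 1) := by
  unfold pd
  have h := hasFDerivAt_affine_comp G (hG.differentiable one_le_tn) (t, x, 0)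
    ((ContinuousLinearMap.inr ℝ ℝ (X3 × X3)).comp (ContinuousLinearMap.inr ℝ X3 X3)) ξ
  have h2 : HasFDerivAt (fun ζ => G (t, x, ζ))
      ((fderiv ℝ G (t, x, ξ)).comp ((ContinuousLinearMap.inr ℝ ℝ (X3 × X3)).comp
        (ContinuousLinearMap.inr ℝ X3 X3))) ξ := by
    rw [eq_slice_v3]
    simpa using h
  rw [h2.fderiv]
  simp

lemma hasDerivAt_slice_t3 (t : ℝ) (x ξ : X3) :
    HasDerivAt (fun τ => G (τ, x, ξ)) (fderiv ℝ G (t, x, ξ) (1, 0, 0)) t := by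
  rw [eq_slice_t3]
  have := (hasFDerivAt_affine_comp G (hG.differentiable one_le_tn) (0, x, ξ)
    (ContinuousLinearMap.inl ℝ ℝ (X3 × X3)) t).hasDerivAt
  simpa [Prod.mk_zero_zero] using this

lemma deriv_slice_t3 (t : ℝ) (x ξ : X3) :
    deriv (fun τ => G (τ, x, ξ)) t = fderiv ℝ G (t, x, ξ) (1, 0, 0) :=
  (hasDerivAt_slice_t3 G hG t x ξ).deriv

lemma cont_fderiv_app_3 (v : ℝ × (X3 × X3)) :
    Continuous (fun q : ℝ × (X3 × X3) => fderiv ℝ G q v) :=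
  (hG.continuous_fderiv one_le_tn).clm_apply continuous_const

end three

section pdcalc

lemma pd_mul (a b : X3 → ℝ) {x : X3} (ha : DifferentiableAt ℝ a x)
    (hb : DifferentiableAt ℝ b x) (i : Fin 3) :
    pd (fun y => a y * b y) i x = pd a i x * b x + a x * pd b i x := by
  unfold pd
  rw [fderiv_fun_mul ha hb]
  simp
  ring

lemma pd_add (a b : X3 → ℝ) {x : X3} (ha : DifferentiableAt ℝ a x)
    (hb : DifferentiableAt ℝ b x) (i : Fin 3) :
    pd (fun y => a y + b y) i x = pd a i x + pd b i x := by
  unfold pd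
  rw [fderiv_fun_add ha hb]
  simp

lemma pd_sum {ι : Type*} (s : Finset ι) (F : ι → X3 → ℝ) {x : X3}
    (hF : ∀ j ∈ s, DifferentiableAt ℝ (F j) x) (i : Fin 3) :
    pd (fun y => ∑ j ∈ s, F j y) i x = ∑ j ∈ s, pd (F j) i x := by
  unfold pd
  rw [fderiv_fun_sum hF]
  simp

lemma pd_const (c : ℝ) (i : Fin 3) (x : X3) : pd (fun _ => c) i x = 0 := by
  unfold pd; rw [fderiv_fun_const]; simp

lemma pd_coord (j i : Fin 3) (x : X3) :
    pd (fun y => y j) i x = if i = j then 1 else 0 := by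
  unfold pd
  have : (fun y : X3 => y j) = (ContinuousLinearMap.proj (R := ℝ) (φ := fun _ : Fin 3 => ℝ) j) := rfl
  rw [this, ContinuousLinearMap.fderiv]
  simp [Pi.single_apply, eq_comm]

lemma pd_sq_sum (i : Fin 3) (x : X3) :
    pd (fun y => ∑ j, (y j) ^ 2) i x = 2 * x i := by
  rw [pd_sum Finset.univ (fun j => fun y => (y j)^2) (fun j _ => by fun_prop) i]
  have : ∀ j, pd (fun y => (y j) ^ 2) i x = if i = j then 2 * x i else 0 := by
    intro j
    have h : (fun y : X3 => (y j)^2) = fun y => y j * y j := by funext y; ring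
    rw [h, pd_mul _ _ (by fun_prop) (by fun_prop) i, pd_coord]
    by_cases hij : i = j <;> simp [hij] <;> ring
  simp [this]

end pdcalc

section integ

lemma D3_subset : D3 ⊆ Set.Icc (0 : X3) 1 := by
  intro x hx
  rw [Set.mem_Icc]
  constructor <;> intro i
  · exact (hx i trivial).1
  · exact (hx i trivial).2.le

lemma D3_meas : MeasurableSet D3 :=
  MeasurableSet.univ_pi fun _ => measurableSet_Ico

lemma D3_vol_lt : (volume : Measure X3) D3 < ⊤ :=
  lt_of_le_of_lt (measure_mono D3_subset) isCompact_Icc.measure_lt_top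

lemma integrableOn_D3 (g : X3 → ℝ) (hc : Continuous g) : IntegrableOn g D3 :=
  (hc.continuousOn.integrableOn_compact isCompact_Icc).mono_set D3_subset

/-- Product measure used for the phase-space integrals. -/
noncomputable def μP : Measure (X3 × X3) := ((volume : Measure X3).restrict D3).prod volume

instance : SFinite ((volume : Measure X3).restrict D3) := by infer_instance

lemma integrable_cpt (g : X3 → ℝ) (hc : Continuous g) (R : ℝ)
    (hsupp : ∀ ξ, R ≤ ‖ξ‖ → g ξ = 0) : Integrable g := by
  apply hc.integrable_of_hasCompactSupport
  apply HasCompactSupport.intro (isCompact_closedBall (0:X3) (max R 0))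
  intro x hx
  apply hsupp
  rw [mem_closedBall, dist_zero_right, not_le] at hx
  exact le_trans (le_max_left _ _) hx.le

lemma integrable_muP (h : X3 × X3 → ℝ) (hc : Continuous h) (R : ℝ)
    (hsupp : ∀ z : X3 × X3, R ≤ ‖z.2‖ → h z = 0) : Integrable h μP := by
  set M : ℝ := max R 0
  have key : IntegrableOn h (D3 ×ˢ (Set.univ : Set X3)) ((volume : Measure X3).prod volume) := by
    have h1 : IntegrableOn h (D3 ×ˢ closedBall (0:X3) M) ((volume : Measure X3).prod volume) := by
      have hcpt : IsCompact (Set.Icc (0:X3) 1 ×ˢ closedBall (0:X3) M) :=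
        isCompact_Icc.prod (isCompact_closedBall _ _)
      exact (hc.continuousOn.integrableOn_compact hcpt).mono_set
        (Set.prod_mono D3_subset le_rfl)
    have h2 : IntegrableOn h (D3 ×ˢ (closedBall (0:X3) M)ᶜ) ((volume : Measure X3).prod volume) := by
      refine (integrable_zero _ _ _).congr ?_
      refine (ae_restrict_iff' ((D3_meas.prod measurableSet_closedBall.compl))).2 ?_
      filter_upwards with z hz
      rw [Set.mem_prod] at hz
      have : M < ‖z.2‖ := by
        have := hz.2
        rw [Set.mem_compl_iff, mem_closedBall, dist_zero_right, not_le] at this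
        exact this
      exact (hsupp z (le_trans (le_max_left _ _) this.le)).symm
    have := h1.union h2
    refine this.mono_set ?_
    intro z hz
    rw [Set.mem_prod] at hz
    by_cases hb : z.2 ∈ closedBall (0:X3) M
    · exact Or.inl (Set.mem_prod.2 ⟨hz.1, hb⟩)
    · exact Or.inr (Set.mem_prod.2 ⟨hz.1, hb⟩)
  have muP_eq : μP = ((volume : Measure X3).prod volume).restrict (D3 ×ˢ Set.univ) := by
    rw [μP, ← Measure.prod_restrict, Measure.restrict_univ]
  rw [muP_eq]
  exact key

lemma muP_eq : μP = ((volume : Measure X3).prod volume).restrict (D3 ×ˢ Set.univ) := by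
  rw [μP, ← Measure.prod_restrict, Measure.restrict_univ]

end integ

section fubini

lemma prod_to_iterated (h : X3 → X3 → ℝ) (hc : Continuous fun z : X3 × X3 => h z.1 z.2)
    (R : ℝ) (hsupp : ∀ x ξ, R ≤ ‖ξ‖ → h x ξ = 0) :
    ∫ z, h z.1 z.2 ∂μP = ∫ x in D3, ∫ ξ, h x ξ := by
  exact MeasureTheory.integral_prod _ (integrable_muP _ hc R (fun z hz => hsupp z.1 z.2 hz))

lemma iterated_swap (h : X3 → X3 → ℝ) (hc : Continuous fun z : X3 × X3 => h z.1 z.2)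
    (R : ℝ) (hsupp : ∀ x ξ, R ≤ ‖ξ‖ → h x ξ = 0) :
    ∫ x in D3, ∫ ξ, h x ξ = ∫ ξ, ∫ x in D3, h x ξ := by
  exact MeasureTheory.integral_integral_swap
    (integrable_muP _ hc R (fun z hz => hsupp z.1 z.2 hz))

lemma integrable_integral_xi (h : X3 → X3 → ℝ) (hc : Continuous fun z : X3 × X3 => h z.1 z.2)
    (R : ℝ) (hsupp : ∀ x ξ, R ≤ ‖ξ‖ → h x ξ = 0) :
    IntegrableOn (fun x => ∫ ξ, h x ξ) D3 := by
  exact (integrable_muP _ hc R (fun z hz => hsupp z.1 z.2 hz)).integral_prod_left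

end fubini

section param

/-- Differentiation under the integral over `D3`. -/
lemma DP1 (G : ℝ × X3 → ℝ) (hG : ContDiff ℝ (⊤:ℕ∞) G) (t₀ : ℝ) :
    HasDerivAt (fun t => ∫ x in D3, G (t, x))
      (∫ x in D3, fderiv ℝ G (t₀, x) (1, 0)) t₀ := by
  obtain ⟨C, hC⟩ := (isCompact_Icc.prod (isCompact_Icc (a := (0:X3)) (b := 1))).exists_bound_of_continuousOn
    (f := fun q : ℝ × X3 => fderiv ℝ G q (1, 0))
    (((hG.continuous_fderiv one_le_tn).clm_apply continuous_const).continuousOn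
      (s := Set.Icc (t₀ - 1) (t₀ + 1) ×ˢ Set.Icc (0:X3) 1))
  refine (hasDerivAt_integral_of_dominated_loc_of_deriv_le
    (F := fun t x => G (t, x)) (F' := fun t x => fderiv ℝ G (t, x) (1, 0))
    (bound := fun _ => C) (s := ball t₀ 1) (ball_mem_nhds t₀ one_pos) ?_ ?_ ?_ ?_ ?_ ?_).2
  · filter_upwards with t
    exact (hG.continuous.comp (continuous_const.prodMk continuous_id)).aestronglyMeasurable
  · exact integrableOn_D3 _ (hG.continuous.comp (continuous_const.prodMk continuous_id))
  · exact (((hG.continuous_fderiv one_le_tn).clm_apply continuous_const).comp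
      (continuous_const.prodMk continuous_id)).aestronglyMeasurable
  · filter_upwards [ae_restrict_mem D3_meas] with x hx
    intro t ht
    refine hC (t, x) ?_
    rw [mem_ball, Real.dist_eq] at ht
    constructor
    · rw [Set.mem_Icc]
      constructor <;> [linarith [neg_abs_le (t - t₀)]; linarith [le_abs_self (t - t₀)]]
    · exact D3_subset hx
  · exact integrableOn_const D3_vol_lt.ne
  · filter_upwards with x
    intro t _
    exact hasDerivAt_slice_t2 G hG t x

/-- Differentiation under the integral over `μP`. -/
lemma DP2 (G : ℝ × (X3 × X3) → ℝ) (hG : ContDiff ℝ (⊤:ℕ∞) G) (R : ℝ)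
    (hsupp : ∀ t (z : X3 × X3), R ≤ ‖z.2‖ → G (t, z) = 0) (t₀ : ℝ) :
    HasDerivAt (fun t => ∫ z, G (t, z) ∂μP)
      (∫ z, fderiv ℝ G (t₀, z) (1, 0, 0) ∂μP) t₀ := by
  set M : ℝ := max R 0 with hM
  have hRM : R ≤ M := le_max_left _ _
  set S : Set (X3 × X3) := Set.Icc (0:X3) 1 ×ˢ closedBall (0:X3) M with hS
  have hScpt : IsCompact S := isCompact_Icc.prod (isCompact_closedBall _ _)
  obtain ⟨C, hC⟩ := (isCompact_Icc.prod hScpt).exists_bound_of_continuousOn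
    (f := fun q : ℝ × (X3 × X3) => fderiv ℝ G q (1, 0, 0))
    (((hG.continuous_fderiv one_le_tn).clm_apply continuous_const).continuousOn
      (s := Set.Icc (t₀ - 1) (t₀ + 1) ×ˢ S))
  set C' : ℝ := max C 0 with hC'
  have hfar : ∀ t (z : X3 × X3), M < ‖z.2‖ → fderiv ℝ G (t, z) (1, 0, 0) = 0 := by
    intro t z hz
    have hev : G =ᶠ[nhds (t, z)] (fun _ => (0:ℝ)) := by
      have hopen : IsOpen {q : ℝ × (X3 × X3) | M < ‖q.2.2‖} :=
        isOpen_lt continuous_const (continuous_norm.comp (continuous_snd.comp continuous_snd))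
      filter_upwards [hopen.mem_nhds hz] with q hq
      exact hsupp q.1 q.2 (le_trans hRM (le_of_lt hq))
    rw [hev.fderiv_eq, fderiv_fun_const]
    simp
  have haeD3 : ∀ᵐ z ∂μP, z.1 ∈ D3 := by
    rw [ae_iff]
    refine measure_mono_null (fun z hz => Set.mem_prod.2 ⟨hz, trivial⟩ :
      {z : X3 × X3 | ¬ z.1 ∈ D3} ⊆ D3ᶜ ×ˢ (Set.univ : Set X3)) ?_
    · rw [μP, Measure.prod_prod, Measure.restrict_apply (D3_meas.compl)]
      simp
  refine (hasDerivAt_integral_of_dominated_loc_of_deriv_le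
    (F := fun t z => G (t, z)) (F' := fun t z => fderiv ℝ G (t, z) (1, 0, 0))
    (bound := Set.indicator S (fun _ => C')) (s := ball t₀ 1) (ball_mem_nhds t₀ one_pos) ?_ ?_ ?_ ?_ ?_ ?_).2
  · filter_upwards with t
    exact ((hG.continuous.comp (continuous_const.prodMk continuous_id))).aestronglyMeasurable
  · exact integrable_muP _ (hG.continuous.comp (continuous_const.prodMk continuous_id)) R
      (fun z hz => hsupp t₀ z hz)
  · exact (((hG.continuous_fderiv one_le_tn).clm_apply continuous_const).comp
      (continuous_const.prodMk continuous_id)).aestronglyMeasurable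
  · filter_upwards [haeD3] with z hz
    intro t ht
    by_cases hb : ‖z.2‖ ≤ M
    · have hzS : z ∈ S := by
        refine Set.mem_prod.2 ⟨D3_subset hz, ?_⟩
        rw [mem_closedBall, dist_zero_right]
        exact hb
      rw [Set.indicator_of_mem hzS]
      refine le_trans (hC (t, z) ?_) (le_max_left _ _)
      rw [mem_ball, Real.dist_eq] at ht
      constructor
      · rw [Set.mem_Icc]
        constructor <;> [linarith [neg_abs_le (t - t₀)]; linarith [le_abs_self (t - t₀)]]
      · exact hzS
    · push_neg at hb
      rw [hfar t z hb]
      simp only [norm_zero]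
      exact Set.indicator_apply_nonneg (fun _ => le_max_right _ _)
  · have hfin : μP S < ⊤ := by
      rw [hS, μP, Measure.prod_prod]
      refine ENNReal.mul_lt_top (lt_of_le_of_lt (Measure.restrict_apply_le _ _) ?_)
        (isCompact_closedBall (0:X3) M).measure_lt_top
      exact isCompact_Icc.measure_lt_top
    have : IntegrableOn (fun _ : X3 × X3 => C') S μP := integrableOn_const hfin.ne
    exact this.integrable_indicator hScpt.measurableSet
  · filter_upwards with z
    intro t _
    exact hasDerivAt_slice_t3 G hG t z.1 z.2

end param

lemma cont_pd (g : X3 → ℝ) (hg : ContDiff ℝ (⊤:ℕ∞) g) (i : Fin 3) :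
    Continuous (pd g i) :=
  (hg.continuous_fderiv one_le_tn).clm_apply continuous_const

lemma pd_const_sub_coord (c : ℝ) (i : Fin 3) (ξ : X3) :
    pd (fun ζ : X3 => c - ζ i) i ξ = -1 := by
  unfold pd
  have h : HasFDerivAt (fun ζ : X3 => c - ζ i)
      (-(ContinuousLinearMap.proj (R := ℝ) (φ := fun _ : Fin 3 => ℝ) i)) ξ :=
    (ContinuousLinearMap.proj (R := ℝ) (φ := fun _ : Fin 3 => ℝ) i).hasFDerivAt.const_sub c
  rw [h.fderiv]
  simp

lemma fderiv_shift (g : X3 → ℝ) (hg : Differentiable ℝ g) (c x : X3) :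
    fderiv ℝ g (x + c) = fderiv ℝ (fun y => g (y + c)) x := by
  have h1 : HasFDerivAt (fun y => g (y + c)) (fderiv ℝ g (x + c)) x := by
    have := (hg (x + c)).hasFDerivAt.comp x ((hasFDerivAt_id x).add_const c)
    simpa [Function.comp_def] using this
  exact h1.fderiv.symm

lemma pd_periodic (g : X3 → ℝ) (hg : Differentiable ℝ g)
    (hper : ∀ x (k : Fin 3 → ℤ), g (x + fun i => (k i : ℝ)) = g x)
    (i : Fin 3) (x : X3) (k : Fin 3 → ℤ) :
    pd g i (x + fun j => (k j : ℝ)) = pd g i x := by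
  unfold pd
  rw [fderiv_shift g hg _ x]
  have h : (fun y => g (y + fun j => (k j : ℝ))) = g := funext fun y => hper y k
  rw [h]
/-- Energy identity for the coupled system (torus realized as periodic functions on `ℝ³`):
`∇ₓ·u = 0`, `∂_t ρ + ∇ₓ·(ρu) = ∫ f dξ`, `∂_t f + ξ·∇ₓ f + ∇_ξ·[(u−ξ)f] = −f`,
`(1+ρ)[∂_t u + ∇ₓ·(u⊗u)] + ∇ₓ p − Δₓ u = 2∫(ξ−u) f dξ`.  Then for all `t`,
`½[M₂f(t) + ‖√(1+ρ(t)) u(t)‖²] + ∫₀ᵗ ‖∇ₓu‖² + (3/2)∫₀ᵗ∫∫ |u−ξ|² f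
  = ½[M₂f(0) + ‖√(1+ρ(0)) u(0)‖²]`. -/
theorem energy_identity
    (T : ℝ) (hT : 0 < T)
    (u : ℝ → (Fin 3 → ℝ) → (Fin 3 → ℝ)) (ρ p : ℝ → (Fin 3 → ℝ) → ℝ)
    (f : ℝ → (Fin 3 → ℝ) → (Fin 3 → ℝ) → ℝ)
    (hu : ContDiff ℝ (⊤ : ℕ∞) fun q : ℝ × (Fin 3 → ℝ) => u q.1 q.2)
    (hρ : ContDiff ℝ (⊤ : ℕ∞) fun q : ℝ × (Fin 3 → ℝ) => ρ q.1 q.2)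
    (hp : ContDiff ℝ (⊤ : ℕ∞) fun q : ℝ × (Fin 3 → ℝ) => p q.1 q.2)
    (hf : ContDiff ℝ (⊤ : ℕ∞) fun q : ℝ × (Fin 3 → ℝ) × (Fin 3 → ℝ) => f q.1 q.2.1 q.2.2)
    (huper : ∀ t x (k : Fin 3 → ℤ), u t (x + fun i => (k i : ℝ)) = u t x)
    (hρper : ∀ t x (k : Fin 3 → ℤ), ρ t (x + fun i => (k i : ℝ)) = ρ t x)
    (hpper : ∀ t x (k : Fin 3 → ℤ), p t (x + fun i => (k i : ℝ)) = p t x)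
    (hfper : ∀ t x ξ (k : Fin 3 → ℤ), f t (x + fun i => (k i : ℝ)) ξ = f t x ξ)
    (hρpos : ∀ t x, 0 ≤ ρ t x) (hfpos : ∀ t x ξ, 0 ≤ f t x ξ)
    (hsupp : ∃ R : ℝ, ∀ t x ξ, R ≤ ‖ξ‖ → f t x ξ = 0)
    -- incompressibility:
    (hdiv : ∀ t x, ∑ i, pd (fun y => u t y i) i x = 0)
    -- continuity equation with source:
    (hrho : ∀ t x, deriv (fun τ => ρ τ x) t +
      (∑ i, pd (fun y => ρ t y * u t y i) i x) = ∫ ξ, f t x ξ)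
    -- Vlasov equation:
    (hvlasov : ∀ t x ξ,
      deriv (fun τ => f τ x ξ) t + (∑ i, ξ i * pd (fun y => f t y ξ) i x) +
        (∑ i, pd (fun ζ => (u t x i - ζ i) * f t x ζ) i ξ) = - f t x ξ)
    -- momentum equation:
    (hns : ∀ t x (i : Fin 3),
      (1 + ρ t x) * (deriv (fun τ => u τ x i) t +
          ∑ j, pd (fun y => u t y j * u t y i) j x) +
        pd (fun y => p t y) i x -
        (∑ j, pd (fun y => pd (fun z => u t z i) j y) j x) =
      2 * ∫ ξ, (ξ i - u t x i) * f t x ξ) :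
    ∀ t ∈ Set.Icc (0:ℝ) T,
      (1/2) * ((∫ x in D3, ∫ ξ, (∑ i, (ξ i) ^ 2) * f t x ξ) +
          ∫ x in D3, (1 + ρ t x) * ∑ i, (u t x i) ^ 2) +
        (∫ s in (0:ℝ)..t, ∫ x in D3, ∑ i, ∑ j, (pd (fun y => u s y i) j x) ^ 2) +
        (3/2) * (∫ s in (0:ℝ)..t, ∫ x in D3, ∫ ξ,
          (∑ i, (u s x i - ξ i) ^ 2) * f s x ξ) =
      (1/2) * ((∫ x in D3, ∫ ξ, (∑ i, (ξ i) ^ 2) * f 0 x ξ) +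
          ∫ x in D3, (1 + ρ 0 x) * ∑ i, (u 0 x i) ^ 2) := by
  obtain ⟨R, hR⟩ := hsupp
  -- smoothness in (⊤:ℕ∞) form
  have hu' : ContDiff ℝ (⊤:ℕ∞) (fun q : ℝ × X3 => u q.1 q.2) := hu.of_le (by simp)
  have hρ' : ContDiff ℝ (⊤:ℕ∞) (fun q : ℝ × X3 => ρ q.1 q.2) := hρ.of_le (by simp)
  have hp' : ContDiff ℝ (⊤:ℕ∞) (fun q : ℝ × X3 => p q.1 q.2) := hp.of_le (by simp)
  have hf' : ContDiff ℝ (⊤:ℕ∞) (fun q : ℝ × (X3 × X3) => f q.1 q.2.1 q.2.2) := hf.of_le (by simp)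
  have hU : ∀ i : Fin 3, ContDiff ℝ (⊤:ℕ∞) (fun q : ℝ × X3 => u q.1 q.2 i) := fun i =>
    (ContinuousLinearMap.proj (R := ℝ) (φ := fun _ : Fin 3 => ℝ) i).contDiff.comp hu'
  -- the four relevant space-time functions
  have hG1 : ContDiff ℝ (⊤:ℕ∞) (fun q : ℝ × X3 => (1 + ρ q.1 q.2) * ∑ i, (u q.1 q.2 i)^2) :=
    (contDiff_const.add hρ').mul (ContDiff.sum fun i _ => (hU i).pow 2)
  have hG2 : ContDiff ℝ (⊤:ℕ∞)
      (fun q : ℝ × (X3 × X3) => (∑ i, (q.2.2 i)^2) * f q.1 q.2.1 q.2.2) := by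
    refine ContDiff.mul (ContDiff.sum fun i _ => ?_) hf'
    exact (((ContinuousLinearMap.proj (R := ℝ) (φ := fun _ : Fin 3 => ℝ) i).comp
      ((ContinuousLinearMap.snd ℝ X3 X3).comp
        (ContinuousLinearMap.snd ℝ ℝ (X3 × X3)))).contDiff).pow 2
  have hUz : ∀ i : Fin 3, ContDiff ℝ (⊤:ℕ∞) (fun q : ℝ × (X3 × X3) => u q.1 q.2.1 i) :=
    fun i => (hU i).comp
      ((contDiff_fst).prodMk ((contDiff_fst.comp contDiff_snd)))
  have hXz : ∀ i : Fin 3, ContDiff ℝ (⊤:ℕ∞) (fun q : ℝ × (X3 × X3) => q.2.2 i) := fun i =>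
    ((ContinuousLinearMap.proj (R := ℝ) (φ := fun _ : Fin 3 => ℝ) i).comp
      ((ContinuousLinearMap.snd ℝ X3 X3).comp
        (ContinuousLinearMap.snd ℝ ℝ (X3 × X3)))).contDiff
  have hG3 : ContDiff ℝ (⊤:ℕ∞)
      (fun q : ℝ × (X3 × X3) => (∑ i, (u q.1 q.2.1 i - q.2.2 i)^2) * f q.1 q.2.1 q.2.2) :=
    (ContDiff.sum fun i _ => ((hUz i).sub (hXz i)).pow 2).mul hf'
  have hGd : ContDiff ℝ (⊤:ℕ∞) (fun q : ℝ × X3 =>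
      ∑ i, ∑ j, (fderiv ℝ (fun r : ℝ × X3 => u r.1 r.2 i) q (0, Pi.single j 1))^2) :=
    ContDiff.sum fun i _ => ContDiff.sum fun j _ =>
      (contDiff_fderiv_app_2 _ (hU i) _).pow 2
  have hcFz : ∀ s, Continuous (fun z : X3 × X3 => f s z.1 z.2) :=
    fun s => (contDiff_slice_z3 _ hf' s).continuous
  have hcUz : ∀ s i, Continuous (fun z : X3 × X3 => u s z.1 i) :=
    fun s i => (contDiff_slice_z3 _ (hUz i) s).continuous
  have hcXz : ∀ i : Fin 3, Continuous (fun z : X3 × X3 => z.2 i) := fun i => (continuous_apply i).comp continuous_snd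
  -- K1 and K2 : the main integral identities
  have K1 : ∀ s : ℝ, (∫ x in D3, fderiv ℝ
        (fun q : ℝ × X3 => (1 + ρ q.1 q.2) * ∑ i, (u q.1 q.2 i)^2) (s, x) (1, 0)) =
      (∫ z : X3 × X3, ((∑ i, (u s z.1 i)^2 + ∑ i, 4 * u s z.1 i * (z.2 i - u s z.1 i))
          * f s z.1 z.2) ∂μP) -
        2 * ∫ x in D3, ∑ i, ∑ j,
          (fderiv ℝ (fun r : ℝ × X3 => u r.1 r.2 i) (s, x) (0, Pi.single j 1))^2 := by
    intro s
    set au : Fin 3 → Fin 3 → X3 → ℝ := fun i j x =>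
      fderiv ℝ (fun r : ℝ × X3 => u r.1 r.2 i) (s, x) (0, Pi.single j 1) with haudef
    have hau_sm : ∀ i j, ContDiff ℝ (⊤:ℕ∞) (au i j) := fun i j =>
      contDiff_slice_x2 _ (contDiff_fderiv_app_2 _ (hU i) _) s
    have hdU : ∀ i, Differentiable ℝ (fun y => u s y i) :=
      fun i => (contDiff_slice_x2 _ (hU i) s).differentiable one_le_tn
    have hdρ : Differentiable ℝ (fun y => ρ s y) :=
      (contDiff_slice_x2 _ hρ' s).differentiable one_le_tn
    have hdp : Differentiable ℝ (fun y => p s y) :=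
      (contDiff_slice_x2 _ hp' s).differentiable one_le_tn
    have hdau : ∀ i j, Differentiable ℝ (au i j) :=
      fun i j => (hau_sm i j).differentiable one_le_tn
    have hpdau : ∀ (i j : Fin 3) (x' : X3), pd (fun y => u s y i) j x' = au i j x' :=
      fun i j x' => pd_slice_x2 _ (hU i) s x' j
    have hpdsq : ∀ (i j : Fin 3) (x : X3),
        pd (fun y => (u s y i)^2) j x = 2 * u s x i * au i j x := by
      intro i j x
      rw [show (fun y => (u s y i)^2) = fun y => u s y i * u s y i from
        funext fun y => pow_two _]
      rw [pd_mul _ _ ((hdU i).differentiableAt) ((hdU i).differentiableAt) j, hpdau]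
      ring
    have hdSu : Differentiable ℝ (fun y => ∑ i, (u s y i)^2) := by
      refine Differentiable.fun_sum fun i _ => ?_
      exact (hdU i).pow 2
    have hpdSu : ∀ (j : Fin 3) (x : X3),
        pd (fun y => ∑ i, (u s y i)^2) j x = ∑ i, 2 * u s x i * au i j x := by
      intro j x
      rw [pd_sum Finset.univ (fun i => fun y => (u s y i)^2)
        (fun i _ => ((hdU i).pow 2).differentiableAt) j]
      exact Finset.sum_congr rfl fun i _ => hpdsq i j x
    -- the three divergence fields
    set W1 : Fin 3 → X3 → ℝ := fun j y => (1 + ρ s y) * u s y j * ∑ i, (u s y i)^2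
      with hW1def
    set W2 : Fin 3 → X3 → ℝ := fun j y => u s y j * p s y with hW2def
    set W3 : Fin 3 → X3 → ℝ := fun j y => ∑ i, u s y i * au i j y with hW3def
    have hW1sm : ∀ j, ContDiff ℝ (⊤:ℕ∞) (W1 j) := fun j =>
      ((contDiff_const.add (contDiff_slice_x2 _ hρ' s)).mul
        (contDiff_slice_x2 _ (hU j) s)).mul (ContDiff.sum fun i _ =>
          (contDiff_slice_x2 _ (hU i) s).pow 2)
    have hW2sm : ∀ j, ContDiff ℝ (⊤:ℕ∞) (W2 j) := fun j =>
      (contDiff_slice_x2 _ (hU j) s).mul (contDiff_slice_x2 _ hp' s)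
    have hW3sm : ∀ j, ContDiff ℝ (⊤:ℕ∞) (W3 j) := fun j =>
      ContDiff.sum fun i _ => (contDiff_slice_x2 _ (hU i) s).mul (hau_sm i j)
    -- periodicity
    have huper' : ∀ (i : Fin 3) (y : X3) (k : Fin 3 → ℤ),
        u s (y + fun l => (k l : ℝ)) i = u s y i := by
      intro i y k
      rw [huper s y k]
    have hauper : ∀ (i j : Fin 3) (x : X3) (k : Fin 3 → ℤ),
        au i j (x + fun l => (k l : ℝ)) = au i j x := by
      intro i j x k
      rw [← hpdau, ← hpdau]
      exact pd_periodic _ (hdU i) (fun y k' => by rw [huper s y k']) j x k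
    have hW1per : ∀ (j : Fin 3) (x : X3) (k : Fin 3 → ℤ),
        W1 j (x + fun l => (k l : ℝ)) = W1 j x := by
      intro j x k
      rw [hW1def]
      simp only [huper', hρper s x k]
    have hW2per : ∀ (j : Fin 3) (x : X3) (k : Fin 3 → ℤ),
        W2 j (x + fun l => (k l : ℝ)) = W2 j x := by
      intro j x k
      rw [hW2def]
      simp only [huper', hpper s x k]
    have hW3per : ∀ (j : Fin 3) (x : X3) (k : Fin 3 → ℤ),
        W3 j (x + fun l => (k l : ℝ)) = W3 j x := by
      intro j x k
      rw [hW3def]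
      simp only [huper', hauper]
    -- pointwise identity
    have I1 : ∀ x : X3, fderiv ℝ
        (fun q : ℝ × X3 => (1 + ρ q.1 q.2) * ∑ i, (u q.1 q.2 i)^2) (s, x) (1, 0)
        = (∫ ξ, (∑ i, (u s x i)^2 + ∑ i, 4 * u s x i * (ξ i - u s x i)) * f s x ξ)
          - 2 * (∑ i, ∑ j, (au i j x)^2)
          - (∑ j, pd (W1 j) j x) - 2 * (∑ j, pd (W2 j) j x)
          + 2 * (∑ j, pd (W3 j) j x) := by
      intro x
      -- time derivative of the kinetic energy density
      have h1 : HasDerivAt (fun τ => (1 + ρ τ x) * ∑ i, (u τ x i)^2)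
          (fderiv ℝ (fun q : ℝ × X3 => ρ q.1 q.2) (s, x) (1, 0) * (∑ i, (u s x i)^2)
            + (1 + ρ s x) * (∑ i, 2 * u s x i *
              fderiv ℝ (fun r : ℝ × X3 => u r.1 r.2 i) (s, x) (1, 0))) s := by
        have hd_rho : HasDerivAt (fun τ => 1 + ρ τ x)
            (fderiv ℝ (fun q : ℝ × X3 => ρ q.1 q.2) (s, x) (1, 0)) s :=
          (hasDerivAt_slice_t2 _ hρ' s x).const_add 1
        have hd_sq : HasDerivAt (fun τ => ∑ i, (u τ x i)^2)
            (∑ i, 2 * u s x i *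
              fderiv ℝ (fun r : ℝ × X3 => u r.1 r.2 i) (s, x) (1, 0)) s := by
          have := HasDerivAt.fun_sum (u := Finset.univ)
            (fun (i : Fin 3) _ => (hasDerivAt_slice_t2 _ (hU i) s x).fun_pow 2)
          refine this.congr_deriv ?_
          refine Finset.sum_congr rfl fun i _ => ?_
          simp
        have := hd_rho.fun_mul hd_sq
        convert this using 1
      have hG1eq := (hasDerivAt_slice_t2 _ hG1 s x).unique h1
      rw [hG1eq]
      -- continuity equation
      have hrho2 := hrho s x
      rw [show deriv (fun τ => ρ τ x) s
          = fderiv ℝ (fun q : ℝ × X3 => ρ q.1 q.2) (s, x) (1, 0) from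
        deriv_slice_t2 _ hρ' s x] at hrho2
      have hpdm : ∀ j : Fin 3, pd (fun y => ρ s y * u s y j) j x
          = pd (fun y => ρ s y) j x * u s x j + ρ s x * au j j x := by
        intro j
        rw [pd_mul _ _ hdρ.differentiableAt ((hdU j).differentiableAt) j, hpdau]
      simp only [hpdm] at hrho2
      -- momentum equation
      have hns2 : ∀ i : Fin 3, (1 + ρ s x) *
          (fderiv ℝ (fun r : ℝ × X3 => u r.1 r.2 i) (s, x) (1, 0)
            + ∑ j, (au j j x * u s x i + u s x j * au i j x))
          + pd (fun y => p s y) i x - (∑ j, pd (au i j) j x)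
          = 2 * ∫ ξ, (ξ i - u s x i) * f s x ξ := by
        intro i
        have h := hns s x i
        rw [show deriv (fun τ => u τ x i) s
            = fderiv ℝ (fun r : ℝ × X3 => u r.1 r.2 i) (s, x) (1, 0) from
          deriv_slice_t2 _ (hU i) s x] at h
        have hpdm2 : ∀ j : Fin 3, pd (fun y => u s y j * u s y i) j x
            = au j j x * u s x i + u s x j * au i j x := by
          intro j
          rw [pd_mul _ _ ((hdU j).differentiableAt) ((hdU i).differentiableAt) j,
            hpdau, hpdau]
        have hpd2conv : ∀ j : Fin 3, pd (fun y => pd (fun z => u s z i) j y) j x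
            = pd (au i j) j x := by
          intro j
          have hfe : (fun y => pd (fun z => u s z i) j y) = au i j :=
            funext fun y => pd_slice_x2 _ (hU i) s y j
          rw [hfe]
        simp only [hpdm2, hpd2conv] at h
        exact h
      -- divergence free
      have hdiv2 := hdiv s x
      simp only [hpdau] at hdiv2
      -- the xi-integral linearity
      have hif : Integrable (fun ξ => f s x ξ) :=
        integrable_cpt _ ((contDiff_slice_v3 _ hf' s x).continuous) R (hR s x)
      have hifi : ∀ i : Fin 3, Integrable (fun ξ : X3 => (ξ i - u s x i) * f s x ξ) :=
        fun i => integrable_cpt _ (((continuous_apply i).sub continuous_const).mul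
          ((contDiff_slice_v3 _ hf' s x).continuous)) R
          (fun ξ h => by rw [hR s x ξ h, mul_zero])
      have hE6 : (∫ ξ, (∑ i, (u s x i)^2 + ∑ i, 4 * u s x i * (ξ i - u s x i)) * f s x ξ)
          = (∑ i, (u s x i)^2) * (∫ ξ, f s x ξ)
            + ∑ i, (4 * u s x i) * ∫ ξ, (ξ i - u s x i) * f s x ξ := by
        have hpt : ∀ ξ : X3, (∑ i, (u s x i)^2 + ∑ i, 4 * u s x i * (ξ i - u s x i))
            * f s x ξ = (∑ i, (u s x i)^2) * f s x ξ
              + ∑ i, (4 * u s x i) * ((ξ i - u s x i) * f s x ξ) := by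
          intro ξ
          simp only [Fin.sum_univ_three]
          ring
        rw [integral_congr_ae (Eventually.of_forall hpt),
          integral_add (hif.const_mul _)
            (integrable_finset_sum _ fun i _ => (hifi i).const_mul _),
          MeasureTheory.integral_const_mul, integral_finset_sum _ (fun i _ => (hifi i).const_mul _)]
        congr 1
        exact Finset.sum_congr rfl fun i _ => MeasureTheory.integral_const_mul _ _
      rw [hE6]
      -- expansion of the W divergences
      have hW1x : ∀ j : Fin 3, pd (W1 j) j x
          = (pd (fun y => ρ s y) j x * u s x j + (1 + ρ s x) * au j j x)
              * (∑ i, (u s x i)^2)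
            + ((1 + ρ s x) * u s x j) * (∑ i, 2 * u s x i * au i j x) := by
        intro j
        rw [hW1def]
        rw [pd_mul _ _ (((differentiableAt_const _).fun_add hdρ.differentiableAt).fun_mul
            ((hdU j).differentiableAt)) hdSu.differentiableAt j]
        rw [pd_mul _ _ ((differentiableAt_const _).fun_add hdρ.differentiableAt)
            ((hdU j).differentiableAt) j]
        rw [pd_add _ _ (differentiableAt_const _) hdρ.differentiableAt j, pd_const]
        rw [hpdau, hpdSu]
        ring
      have hW2x : ∀ j : Fin 3, pd (W2 j) j x
          = au j j x * p s x + u s x j * pd (fun y => p s y) j x := by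
        intro j
        rw [hW2def]
        rw [pd_mul _ _ ((hdU j).differentiableAt) hdp.differentiableAt j, hpdau]
      have hW3x : ∀ j : Fin 3, pd (W3 j) j x
          = ∑ i, (au i j x * au i j x + u s x i * pd (au i j) j x) := by
        intro j
        rw [hW3def]
        rw [pd_sum Finset.univ (fun i => fun y => u s y i * au i j y)
          (fun i _ => ((hdU i).mul (hdau i j)).differentiableAt) j]
        refine Finset.sum_congr rfl fun i _ => ?_
        rw [pd_mul _ _ ((hdU i).differentiableAt) ((hdau i j).differentiableAt) j, hpdau]
      simp only [hW1x, hW2x, hW3x]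
      -- final algebra
      have h0 := hrho2
      have h1' := hns2 0
      have h2' := hns2 1
      have h3' := hns2 2
      simp only [Fin.sum_univ_three] at h0 h1' h2' h3' hdiv2 ⊢
      linear_combination (u s x 0^2 + u s x 1^2 + u s x 2^2) * h0
        + 2 * u s x 0 * h1' + 2 * u s x 1 * h2' + 2 * u s x 2 * h3'
        + (2 * p s x - (1 + 2 * ρ s x) * (u s x 0^2 + u s x 1^2 + u s x 2^2)) * hdiv2
    -- now integrate over the torus
    rw [setIntegral_congr_fun D3_meas (fun x _ => I1 x)]
    -- integrability of the pieces
    have hcbr : Continuous (fun z : X3 × X3 =>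
        (∑ i, (u s z.1 i)^2 + ∑ i, 4 * u s z.1 i * (z.2 i - u s z.1 i)) * f s z.1 z.2) :=
      ((continuous_finset_sum _ fun i _ => (hcUz s i).pow 2).add
        (continuous_finset_sum _ fun i _ =>
          (continuous_const.mul (hcUz s i)).mul ((hcXz i).sub (hcUz s i)))).mul (hcFz s)
    have hsbr : ∀ (x ξ : X3), R ≤ ‖ξ‖ →
        (∑ i, (u s x i)^2 + ∑ i, 4 * u s x i * (ξ i - u s x i)) * f s x ξ = 0 :=
      fun x ξ h => by rw [hR s x ξ h, mul_zero]
    have iT1 : IntegrableOn (fun x => ∫ ξ,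
        (∑ i, (u s x i)^2 + ∑ i, 4 * u s x i * (ξ i - u s x i)) * f s x ξ) D3 :=
      integrable_integral_xi _ hcbr R hsbr
    have hcau : ∀ i j, Continuous (au i j) := fun i j => (hau_sm i j).continuous
    have iT2 : IntegrableOn (fun x => 2 * ∑ i, ∑ j, (au i j x)^2) D3 :=
      integrableOn_D3 _ (continuous_const.mul (continuous_finset_sum _ fun i _ =>
        continuous_finset_sum _ fun j _ => (hcau i j).pow 2))
    have iW1 : IntegrableOn (fun x => ∑ j, pd (W1 j) j x) D3 :=
      integrableOn_D3 _ (continuous_finset_sum _ fun j _ => cont_pd _ (hW1sm j) j)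
    have iW2 : IntegrableOn (fun x => 2 * ∑ j, pd (W2 j) j x) D3 :=
      integrableOn_D3 _ (continuous_const.mul
        (continuous_finset_sum _ fun j _ => cont_pd _ (hW2sm j) j))
    have iW3 : IntegrableOn (fun x => 2 * ∑ j, pd (W3 j) j x) D3 :=
      integrableOn_D3 _ (continuous_const.mul
        (continuous_finset_sum _ fun j _ => cont_pd _ (hW3sm j) j))
    rw [MeasureTheory.integral_add
      (f := fun x => (∫ ξ, (∑ i, (u s x i)^2 + ∑ i, 4 * u s x i * (ξ i - u s x i))
        * f s x ξ) - 2 * (∑ i, ∑ j, (au i j x)^2)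
        - (∑ j, pd (W1 j) j x) - 2 * (∑ j, pd (W2 j) j x))
      (g := fun x => 2 * (∑ j, pd (W3 j) j x))
      (((iT1.sub iT2).sub iW1).sub iW2) iW3]
    rw [MeasureTheory.integral_sub
      (f := fun x => (∫ ξ, (∑ i, (u s x i)^2 + ∑ i, 4 * u s x i * (ξ i - u s x i))
        * f s x ξ) - 2 * (∑ i, ∑ j, (au i j x)^2) - (∑ j, pd (W1 j) j x))
      (g := fun x => 2 * (∑ j, pd (W2 j) j x))
      ((iT1.sub iT2).sub iW1) iW2]
    rw [MeasureTheory.integral_sub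
      (f := fun x => (∫ ξ, (∑ i, (u s x i)^2 + ∑ i, 4 * u s x i * (ξ i - u s x i))
        * f s x ξ) - 2 * (∑ i, ∑ j, (au i j x)^2))
      (g := fun x => ∑ j, pd (W1 j) j x) (iT1.sub iT2) iW1]
    rw [MeasureTheory.integral_sub
      (f := fun x => ∫ ξ, (∑ i, (u s x i)^2 + ∑ i, 4 * u s x i * (ξ i - u s x i))
        * f s x ξ)
      (g := fun x => 2 * (∑ i, ∑ j, (au i j x)^2)) iT1 iT2]
    -- the divergence terms vanish
    have hz1 : (∫ x in D3, ∑ j, pd (W1 j) j x) = 0 := by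
      rw [integral_finset_sum _ (fun j _ => integrableOn_D3 _ (cont_pd _ (hW1sm j) j))]
      exact Finset.sum_eq_zero fun j _ =>
        torus_IBP _ (hW1sm j) (fun x k => hW1per j x k) j
    have hz2 : (∫ x in D3, ∑ j, pd (W2 j) j x) = 0 := by
      rw [integral_finset_sum _ (fun j _ => integrableOn_D3 _ (cont_pd _ (hW2sm j) j))]
      exact Finset.sum_eq_zero fun j _ =>
        torus_IBP _ (hW2sm j) (fun x k => hW2per j x k) j
    have hz3 : (∫ x in D3, ∑ j, pd (W3 j) j x) = 0 := by
      rw [integral_finset_sum _ (fun j _ => integrableOn_D3 _ (cont_pd _ (hW3sm j) j))]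
      exact Finset.sum_eq_zero fun j _ =>
        torus_IBP _ (hW3sm j) (fun x k => hW3per j x k) j
    have hT1 : (∫ x in D3, ∫ ξ,
        (∑ i, (u s x i)^2 + ∑ i, 4 * u s x i * (ξ i - u s x i)) * f s x ξ)
        = ∫ z : X3 × X3, ((∑ i, (u s z.1 i)^2 + ∑ i, 4 * u s z.1 i * (z.2 i - u s z.1 i))
            * f s z.1 z.2) ∂μP :=
      (prod_to_iterated _ hcbr R hsbr).symm
    rw [hT1, MeasureTheory.integral_const_mul, MeasureTheory.integral_const_mul, MeasureTheory.integral_const_mul, hz1, hz2, hz3]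
    ring
  have K2 : ∀ s : ℝ, (∫ z : X3 × X3, fderiv ℝ
        (fun q : ℝ × (X3 × X3) => (∑ i, (q.2.2 i)^2) * f q.1 q.2.1 q.2.2) (s, z) (1, 0, 0) ∂μP) =
      ∫ z : X3 × X3, ((∑ i, 2 * z.2 i * (u s z.1 i - z.2 i) - ∑ i, (z.2 i)^2)
          * f s z.1 z.2) ∂μP := by
    intro s
    have hfd0 : ∀ (t : ℝ) (x ξ : X3), R < ‖ξ‖ →
        fderiv ℝ (fun q : ℝ × (X3 × X3) => f q.1 q.2.1 q.2.2) (t, x, ξ) = 0 := by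
      intro t x ξ hξ
      have hopen : IsOpen {q : ℝ × (X3 × X3) | R < ‖q.2.2‖} :=
        isOpen_lt continuous_const (continuous_norm.comp (continuous_snd.comp continuous_snd))
      have hev : (fun q : ℝ × (X3 × X3) => f q.1 q.2.1 q.2.2) =ᶠ[nhds (t, x, ξ)]
          (fun _ => (0:ℝ)) := by
        filter_upwards [hopen.mem_nhds hξ] with q hq
        exact hR q.1 q.2.1 q.2.2 hq.le
      rw [hev.fderiv_eq, fderiv_fun_const]
      rfl
    have hfdiffv : ∀ (x : X3), Differentiable ℝ (fun ζ => f s x ζ) :=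
      fun x => (contDiff_slice_v3 _ hf' s x).differentiable one_le_tn
    set A' : X3 × X3 → ℝ := fun z => (∑ i, (z.2 i)^2) * ∑ i, z.2 i *
      fderiv ℝ (fun q : ℝ × (X3 × X3) => f q.1 q.2.1 q.2.2) (s, z.1, z.2)
        (0, Pi.single i 1, 0) with hA'def
    set B' : X3 × X3 → ℝ := fun z => (∑ i, (z.2 i)^2) * ∑ i, (-(f s z.1 z.2) +
      (u s z.1 i - z.2 i) * fderiv ℝ (fun q : ℝ × (X3 × X3) => f q.1 q.2.1 q.2.2)
        (s, z.1, z.2) (0, 0, Pi.single i 1)) with hB'def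
    set C' : X3 × X3 → ℝ := fun z => (∑ i, (z.2 i)^2) * f s z.1 z.2 with hC'def
    set Bn : X3 × X3 → ℝ := fun z =>
      (-(2 * ∑ i, z.2 i * (u s z.1 i - z.2 i))) * f s z.1 z.2 with hBndef
    have hpdexp : ∀ (x ξ : X3) (i : Fin 3),
        pd (fun ζ => (u s x i - ζ i) * f s x ζ) i ξ = -(f s x ξ) +
          (u s x i - ξ i) * fderiv ℝ (fun q : ℝ × (X3 × X3) => f q.1 q.2.1 q.2.2)
            (s, x, ξ) (0, 0, Pi.single i 1) := by
      intro x ξ i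
      rw [pd_mul _ _ (by fun_prop) ((hfdiffv x).differentiableAt) i,
        pd_const_sub_coord, pd_slice_v3 _ hf' s x ξ i]
      ring
    have hpt : ∀ (x ξ : X3), fderiv ℝ (fun q : ℝ × (X3 × X3) =>
        (∑ i, (q.2.2 i)^2) * f q.1 q.2.1 q.2.2) (s, x, ξ) (1, 0, 0) =
        - A' (x, ξ) - B' (x, ξ) - C' (x, ξ) := by
      intro x ξ
      have h1 : HasDerivAt (fun τ => (∑ i, (ξ i)^2) * f τ x ξ)
          ((∑ i, (ξ i)^2) * fderiv ℝ (fun q : ℝ × (X3 × X3) => f q.1 q.2.1 q.2.2)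
            (s, x, ξ) (1, 0, 0)) s :=
        HasDerivAt.const_mul (∑ i, (ξ i)^2) (hasDerivAt_slice_t3 _ hf' s x ξ)
      have h2 := hasDerivAt_slice_t3 _ hG2 s x ξ
      rw [h2.unique h1]
      have hdt : fderiv ℝ (fun q : ℝ × (X3 × X3) => f q.1 q.2.1 q.2.2) (s, x, ξ) (1, 0, 0)
          = - f s x ξ - (∑ i, ξ i * pd (fun y => f s y ξ) i x)
            - (∑ i, pd (fun ζ => (u s x i - ζ i) * f s x ζ) i ξ) := by
        have hv := hvlasov s x ξ
        rw [deriv_slice_t3 _ hf' s x ξ] at hv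
        linarith
      rw [hdt]
      have hsx : (∑ i, ξ i * pd (fun y => f s y ξ) i x) = ∑ i, ξ i *
          fderiv ℝ (fun q : ℝ × (X3 × X3) => f q.1 q.2.1 q.2.2) (s, x, ξ)
            (0, Pi.single i 1, 0) :=
        Finset.sum_congr rfl fun i _ => by rw [pd_slice_x3 _ hf' s x ξ i]
      have hsv : (∑ i, pd (fun ζ => (u s x i - ζ i) * f s x ζ) i ξ) = ∑ i,
          (-(f s x ξ) + (u s x i - ξ i) *
            fderiv ℝ (fun q : ℝ × (X3 × X3) => f q.1 q.2.1 q.2.2) (s, x, ξ)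
              (0, 0, Pi.single i 1)) :=
        Finset.sum_congr rfl fun i _ => hpdexp x ξ i
      rw [hsx, hsv, hA'def, hB'def, hC'def]
      ring
    have hcfd3 : ∀ v : ℝ × (X3 × X3), Continuous (fun z : X3 × X3 =>
        fderiv ℝ (fun q : ℝ × (X3 × X3) => f q.1 q.2.1 q.2.2) (s, z.1, z.2) v) :=
      fun v => (cont_fderiv_app_3 _ hf' v).comp
        (continuous_const.prodMk (continuous_fst.prodMk continuous_snd))
    have hcA : Continuous A' := by
      rw [hA'def]
      exact (continuous_finset_sum _ fun i _ => (hcXz i).pow 2).mul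
        (continuous_finset_sum _ fun i _ => (hcXz i).mul (hcfd3 _))
    have hcB : Continuous B' := by
      rw [hB'def]
      exact (continuous_finset_sum _ fun i _ => (hcXz i).pow 2).mul
        (continuous_finset_sum _ fun i _ => ((hcFz s).neg).add
          (((hcUz s i).sub (hcXz i)).mul (hcfd3 _)))
    have hcC : Continuous C' := by
      rw [hC'def]
      exact (continuous_finset_sum _ fun i _ => (hcXz i).pow 2).mul (hcFz s)
    have hcBn : Continuous Bn := by
      rw [hBndef]
      exact ((continuous_const.mul (continuous_finset_sum _ fun i _ =>
        (hcXz i).mul ((hcUz s i).sub (hcXz i)))).neg).mul (hcFz s)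
    have hsA : ∀ z : X3 × X3, R + 1 ≤ ‖z.2‖ → A' z = 0 := by
      intro z hz
      rw [hA'def]
      simp [hfd0 s z.1 z.2 (by linarith [lt_add_one R])]
    have hsB : ∀ z : X3 × X3, R + 1 ≤ ‖z.2‖ → B' z = 0 := by
      intro z hz
      rw [hB'def]
      simp [hfd0 s z.1 z.2 (by linarith [lt_add_one R]), hR s z.1 z.2 (by linarith)]
    have hsC : ∀ z : X3 × X3, R + 1 ≤ ‖z.2‖ → C' z = 0 := by
      intro z hz
      rw [hC'def]
      simp [hR s z.1 z.2 (by linarith)]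
    have hsBn : ∀ z : X3 × X3, R + 1 ≤ ‖z.2‖ → Bn z = 0 := by
      intro z hz
      rw [hBndef]
      simp [hR s z.1 z.2 (by linarith)]
    have hiA : Integrable A' μP := integrable_muP _ hcA (R+1) hsA
    have hiB : Integrable B' μP := integrable_muP _ hcB (R+1) hsB
    have hiC : Integrable C' μP := integrable_muP _ hcC (R+1) hsC
    have hiBn : Integrable Bn μP := integrable_muP _ hcBn (R+1) hsBn
    have h1 : ∫ z, fderiv ℝ (fun q : ℝ × (X3 × X3) =>
        (∑ i, (q.2.2 i)^2) * f q.1 q.2.1 q.2.2) (s, z) (1, 0, 0) ∂μP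
        = ∫ z, (- A' z - B' z - C' z) ∂μP :=
      integral_congr_ae (Eventually.of_forall fun z => hpt z.1 z.2)
    have h2 : ∫ z, (- A' z - B' z - C' z) ∂μP
        = -(∫ z, A' z ∂μP) - (∫ z, B' z ∂μP) - ∫ z, C' z ∂μP := by
      rw [MeasureTheory.integral_sub (f := fun z => - A' z - B' z) (g := C')
          (hiA.neg.sub hiB) hiC,
        MeasureTheory.integral_sub (f := fun z => - A' z) (g := B') hiA.neg hiB,
        MeasureTheory.integral_neg]
    have hAzero : ∫ z, A' z ∂μP = 0 := by
      have hit : ∫ z, A' z ∂μP = ∫ x in D3, ∫ ξ, A' (x, ξ) :=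
        prod_to_iterated (fun x ξ => A' (x, ξ)) hcA (R+1) (fun x ξ h => hsA (x, ξ) h)
      have hsw : (∫ x in D3, ∫ ξ, A' (x, ξ)) = ∫ ξ, ∫ x in D3, A' (x, ξ) :=
        iterated_swap (fun x ξ => A' (x, ξ)) hcA (R+1) (fun x ξ h => hsA (x, ξ) h)
      rw [hit, hsw]
      have hinner : ∀ ξ : X3, (∫ x in D3, A' (x, ξ)) = 0 := by
        intro ξ
        have hint : ∀ i : Fin 3, IntegrableOn (fun x => ξ i *
            fderiv ℝ (fun q : ℝ × (X3 × X3) => f q.1 q.2.1 q.2.2) (s, x, ξ)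
              (0, Pi.single i 1, 0)) D3 :=
          fun i => integrableOn_D3 _ (continuous_const.mul ((cont_fderiv_app_3 _ hf' _).comp
            (continuous_const.prodMk (continuous_id.prodMk continuous_const))))
        rw [hA'def]
        simp only
        rw [MeasureTheory.integral_const_mul, integral_finset_sum _ (fun i _ => hint i)]
        have hz : ∀ i : Fin 3, (∫ x in D3, ξ i *
            fderiv ℝ (fun q : ℝ × (X3 × X3) => f q.1 q.2.1 q.2.2) (s, x, ξ)
              (0, Pi.single i 1, 0)) = 0 := by
          intro i
          rw [MeasureTheory.integral_const_mul]
          have hpd : (∫ x in D3, fderiv ℝ (fun q : ℝ × (X3 × X3) => f q.1 q.2.1 q.2.2)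
              (s, x, ξ) (0, Pi.single i 1, 0)) = ∫ x in D3, pd (fun y => f s y ξ) i x :=
            setIntegral_congr_fun D3_meas fun x _ => (pd_slice_x3 _ hf' s x ξ i).symm
          rw [hpd, torus_IBP (fun y => f s y ξ) (contDiff_slice_x3 _ hf' s ξ)
            (fun x k => hfper s x ξ k) i, mul_zero]
        simp [hz]
      simp [hinner]
    have hBchange : ∫ z, B' z ∂μP = ∫ z, Bn z ∂μP := by
      have hit : ∫ z, B' z ∂μP = ∫ x in D3, ∫ ξ, B' (x, ξ) :=
        prod_to_iterated (fun x ξ => B' (x, ξ)) hcB (R+1) (fun x ξ h => hsB (x, ξ) h)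
      have hit2 : ∫ z, Bn z ∂μP = ∫ x in D3, ∫ ξ, Bn (x, ξ) :=
        prod_to_iterated (fun x ξ => Bn (x, ξ)) hcBn (R+1) (fun x ξ h => hsBn (x, ξ) h)
      rw [hit, hit2]
      refine integral_congr_ae (Eventually.of_forall fun x => ?_)
      show (∫ ξ, B' (x, ξ)) = ∫ ξ, Bn (x, ξ)
      have hΦsm : ∀ i : Fin 3, ContDiff ℝ (⊤:ℕ∞)
          (fun ζ : X3 => (∑ j, (ζ j)^2) * ((u s x i - ζ i) * f s x ζ)) := by
        intro i
        refine ContDiff.mul (ContDiff.sum fun j _ => ?_)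
          ((contDiff_const.sub ((ContinuousLinearMap.proj (R := ℝ)
            (φ := fun _ : Fin 3 => ℝ) i).contDiff)).mul (contDiff_slice_v3 _ hf' s x))
        exact ((ContinuousLinearMap.proj (R := ℝ) (φ := fun _ : Fin 3 => ℝ) j).contDiff).pow 2
      have hΦsupp : ∀ (i : Fin 3) (ζ : X3), R ≤ ‖ζ‖ →
          (∑ j, (ζ j)^2) * ((u s x i - ζ i) * f s x ζ) = 0 := by
        intro i ζ h
        rw [hR s x ζ h]
        ring
      have hΦexp : ∀ (i : Fin 3) (ξ : X3),
          pd (fun ζ : X3 => (∑ j, (ζ j)^2) * ((u s x i - ζ i) * f s x ζ)) i ξ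
          = 2 * ξ i * ((u s x i - ξ i) * f s x ξ) + (∑ j, (ξ j)^2) *
            (-(f s x ξ) + (u s x i - ξ i) *
              fderiv ℝ (fun q : ℝ × (X3 × X3) => f q.1 q.2.1 q.2.2) (s, x, ξ)
                (0, 0, Pi.single i 1)) := by
        intro i ξ
        have hdb : DifferentiableAt ℝ (fun ζ : X3 => (u s x i - ζ i) * f s x ζ) ξ := by
          refine DifferentiableAt.mul (by fun_prop) ((hfdiffv x).differentiableAt)
        rw [pd_mul _ _ (by fun_prop) hdb i, pd_sq_sum]
        have hb := hpdexp x ξ i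
        rw [hb]
      have hsplit : ∀ ξ : X3, B' (x, ξ) =
          (∑ i, pd (fun ζ : X3 => (∑ j, (ζ j)^2) * ((u s x i - ζ i) * f s x ζ)) i ξ)
            + Bn (x, ξ) := by
        intro ξ
        simp only [hB'def, hBndef, hΦexp]
        simp only [Fin.sum_univ_three]
        ring
      rw [integral_congr_ae (Eventually.of_forall hsplit)]
      have hintpd : ∀ i : Fin 3, Integrable (fun ξ : X3 =>
          pd (fun ζ : X3 => (∑ j, (ζ j)^2) * ((u s x i - ζ i) * f s x ζ)) i ξ) := by
        intro i
        refine integrable_cpt _ (cont_pd _ (hΦsm i) i) (R+1) (fun ξ h => ?_)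
        exact pd_eq_zero_of_far _ R (hΦsupp i) i (by linarith [lt_add_one R])
      have hintBn : Integrable (fun ξ : X3 => Bn (x, ξ)) := by
        refine integrable_cpt _ ?_ (R+1) (fun ξ h => hsBn (x, ξ) h)
        exact hcBn.comp (Continuous.prodMk_right x)
      rw [integral_add (integrable_finset_sum _ fun i _ => hintpd i) hintBn,
        integral_finset_sum _ (fun i _ => hintpd i)]
      have hz : ∀ i : Fin 3, (∫ ξ : X3,
          pd (fun ζ : X3 => (∑ j, (ζ j)^2) * ((u s x i - ζ i) * f s x ζ)) i ξ) = 0 :=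
        fun i => rn_IBP _ (hΦsm i) R (hΦsupp i) i
      simp [hz]
    have hRHS : ∫ z : X3 × X3, ((∑ i, 2 * z.2 i * (u s z.1 i - z.2 i) - ∑ i, (z.2 i)^2)
        * f s z.1 z.2) ∂μP = -(∫ z, Bn z ∂μP) - ∫ z, C' z ∂μP := by
      rw [← MeasureTheory.integral_neg, ← MeasureTheory.integral_sub (f := fun z => -(Bn z)) (g := C') hiBn.neg hiC]
      refine integral_congr_ae (Eventually.of_forall fun z => ?_)
      show (∑ i, 2 * z.2 i * (u s z.1 i - z.2 i) - ∑ i, (z.2 i)^2) * f s z.1 z.2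
        = - Bn z - C' z
      rw [hBndef, hC'def]
      simp only [Fin.sum_univ_three]
      ring
    rw [h1, h2, hAzero, hBchange, hRHS]
    ring
  have K3 : ∀ s : ℝ,
      (∫ z : X3 × X3, ((∑ i, (u s z.1 i)^2 + ∑ i, 4 * u s z.1 i * (z.2 i - u s z.1 i))
          * f s z.1 z.2) ∂μP) +
      (∫ z : X3 × X3, ((∑ i, 2 * z.2 i * (u s z.1 i - z.2 i) - ∑ i, (z.2 i)^2)
          * f s z.1 z.2) ∂μP) =
      -3 * ∫ z : X3 × X3, (∑ i, (u s z.1 i - z.2 i)^2) * f s z.1 z.2 ∂μP := by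
    intro s
    have int1 : Integrable (fun z : X3 × X3 =>
        (∑ i, (u s z.1 i)^2 + ∑ i, 4 * u s z.1 i * (z.2 i - u s z.1 i)) * f s z.1 z.2) μP := by
      refine integrable_muP _ ?_ R (fun z hz => ?_)
      · exact ((continuous_finset_sum _ fun i _ => (hcUz s i).pow 2).add
          (continuous_finset_sum _ fun i _ =>
            (continuous_const.mul (hcUz s i)).mul ((hcXz i).sub (hcUz s i)))).mul (hcFz s)
      · show (∑ i, (u s z.1 i)^2 + ∑ i, 4 * u s z.1 i * (z.2 i - u s z.1 i)) * f s z.1 z.2 = 0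
        rw [hR s z.1 z.2 hz, mul_zero]
    have int2 : Integrable (fun z : X3 × X3 =>
        (∑ i, 2 * z.2 i * (u s z.1 i - z.2 i) - ∑ i, (z.2 i)^2) * f s z.1 z.2) μP := by
      refine integrable_muP _ ?_ R (fun z hz => ?_)
      · exact ((continuous_finset_sum _ fun i _ =>
          (continuous_const.mul (hcXz i)).mul ((hcUz s i).sub (hcXz i))).sub
            (continuous_finset_sum _ fun i _ => (hcXz i).pow 2)).mul (hcFz s)
      · show (∑ i, 2 * z.2 i * (u s z.1 i - z.2 i) - ∑ i, (z.2 i)^2) * f s z.1 z.2 = 0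
        rw [hR s z.1 z.2 hz, mul_zero]
    rw [← integral_add int1 int2, ← MeasureTheory.integral_const_mul]
    refine integral_congr_ae (Eventually.of_forall fun z => ?_)
    show (∑ i, (u s z.1 i)^2 + ∑ i, 4 * u s z.1 i * (z.2 i - u s z.1 i)) * f s z.1 z.2 +
        (∑ i, 2 * z.2 i * (u s z.1 i - z.2 i) - ∑ i, (z.2 i)^2) * f s z.1 z.2
      = -3 * ((∑ i, (u s z.1 i - z.2 i)^2) * f s z.1 z.2)
    simp only [Fin.sum_univ_three]
    ring
  -- conversions between iterated and product integrals
  have he2 : ∀ s : ℝ, (∫ x in D3, ∫ ξ, (∑ i, (ξ i) ^ 2) * f s x ξ)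
      = ∫ z : X3 × X3, (∑ i, (z.2 i)^2) * f s z.1 z.2 ∂μP := by
    intro s
    refine (prod_to_iterated (fun x ξ => (∑ i, (ξ i)^2) * f s x ξ) ?_ R ?_).symm
    · exact ((contDiff_slice_z3 _ hG2 s).continuous)
    · intro x ξ hξ
      show (∑ i, (ξ i)^2) * f s x ξ = 0
      rw [hR s x ξ hξ, mul_zero]
  have hd2 : ∀ s : ℝ, (∫ x in D3, ∫ ξ, (∑ i, (u s x i - ξ i) ^ 2) * f s x ξ)
      = ∫ z : X3 × X3, (∑ i, (u s z.1 i - z.2 i)^2) * f s z.1 z.2 ∂μP := by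
    intro s
    refine (prod_to_iterated (fun x ξ => (∑ i, (u s x i - ξ i)^2) * f s x ξ) ?_ R ?_).symm
    · exact ((contDiff_slice_z3 _ hG3 s).continuous)
    · intro x ξ hξ
      show (∑ i, (u s x i - ξ i)^2) * f s x ξ = 0
      rw [hR s x ξ hξ, mul_zero]
  -- derivative of the kinetic fluid energy
  have hB : ∀ s : ℝ, HasDerivAt (fun τ => ∫ x in D3, (1 + ρ τ x) * ∑ i, (u τ x i)^2)
      (∫ x in D3, fderiv ℝ
        (fun q : ℝ × X3 => (1 + ρ q.1 q.2) * ∑ i, (u q.1 q.2 i)^2) (s, x) (1, 0)) s :=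
    fun s => DP1 _ hG1 s
  -- derivative of the kinetic particle energy
  have hA : ∀ s : ℝ, HasDerivAt (fun τ => ∫ x in D3, ∫ ξ, (∑ i, (ξ i) ^ 2) * f τ x ξ)
      (∫ z : X3 × X3, fderiv ℝ
        (fun q : ℝ × (X3 × X3) => (∑ i, (q.2.2 i)^2) * f q.1 q.2.1 q.2.2) (s, z)
          (1, 0, 0) ∂μP) s := by
    intro s
    have := DP2 _ hG2 R (fun t z hz => by
      show (∑ i, (z.2 i)^2) * f t z.1 z.2 = 0
      rw [hR t z.1 z.2 hz, mul_zero]) s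
    refine HasDerivAt.congr_of_eventuallyEq this ?_
    filter_upwards with τ
    exact (he2 τ).symm ▸ rfl
  -- continuity of the dissipation terms
  have hd1cont : Continuous (fun s => ∫ x in D3, ∑ i, ∑ j,
      (pd (fun y => u s y i) j x) ^ 2) := by
    have hcont : Continuous (fun s => ∫ x in D3, (fun q : ℝ × X3 =>
        ∑ i, ∑ j, (fderiv ℝ (fun r : ℝ × X3 => u r.1 r.2 i) q (0, Pi.single j 1))^2) (s, x)) :=
      continuous_iff_continuousAt.2 fun s => (DP1 _ hGd s).continuousAt
    refine Continuous.congr hcont fun s => ?_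
    refine setIntegral_congr_fun D3_meas (fun x _ => ?_)
    refine Finset.sum_congr rfl (fun i _ => Finset.sum_congr rfl (fun j _ => ?_))
    congr 1
    exact (pd_slice_x2 _ (hU i) s x j).symm
  have hd2cont : Continuous (fun s => ∫ x in D3, ∫ ξ,
      (∑ i, (u s x i - ξ i) ^ 2) * f s x ξ) := by
    have hG3supp : ∀ (t : ℝ) (z : X3 × X3), R ≤ ‖z.2‖ →
        (fun q : ℝ × (X3 × X3) =>
          (∑ i, (u q.1 q.2.1 i - q.2.2 i)^2) * f q.1 q.2.1 q.2.2) (t, z) = 0 := by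
      intro t z hz
      show (∑ i, (u t z.1 i - z.2 i)^2) * f t z.1 z.2 = 0
      rw [hR t z.1 z.2 hz, mul_zero]
    have hcont : Continuous (fun s => ∫ z, (fun q : ℝ × (X3 × X3) =>
        (∑ i, (u q.1 q.2.1 i - q.2.2 i)^2) * f q.1 q.2.1 q.2.2) (s, z) ∂μP) :=
      continuous_iff_continuousAt.2 fun s => (DP2 _ hG3 R hG3supp s).continuousAt
    refine Continuous.congr hcont fun s => ?_
    exact (hd2 s).symm
  have hd1eq : ∀ s : ℝ, (∫ x in D3, ∑ i, ∑ j, (pd (fun y => u s y i) j x) ^ 2)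
      = ∫ x in D3, ∑ i, ∑ j,
          (fderiv ℝ (fun r : ℝ × X3 => u r.1 r.2 i) (s, x) (0, Pi.single j 1))^2 := by
    intro s
    refine setIntegral_congr_fun D3_meas (fun x _ => ?_)
    refine Finset.sum_congr rfl (fun i _ => Finset.sum_congr rfl (fun j _ => ?_))
    congr 1
    exact pd_slice_x2 _ (hU i) s x j
  -- FTC derivatives
  have hC : ∀ s : ℝ, HasDerivAt (fun τ => ∫ σ in (0:ℝ)..τ, ∫ x in D3,
      ∑ i, ∑ j, (pd (fun y => u σ y i) j x) ^ 2)
      (∫ x in D3, ∑ i, ∑ j, (pd (fun y => u s y i) j x) ^ 2) s := fun s =>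
    intervalIntegral.integral_hasDerivAt_right (hd1cont.intervalIntegrable _ _)
      (hd1cont.stronglyMeasurableAtFilter _ _) hd1cont.continuousAt
  have hD : ∀ s : ℝ, HasDerivAt (fun τ => ∫ σ in (0:ℝ)..τ, ∫ x in D3, ∫ ξ,
      (∑ i, (u σ x i - ξ i) ^ 2) * f σ x ξ)
      (∫ x in D3, ∫ ξ, (∑ i, (u s x i - ξ i) ^ 2) * f s x ξ) s := fun s =>
    intervalIntegral.integral_hasDerivAt_right (hd2cont.intervalIntegrable _ _)
      (hd2cont.stronglyMeasurableAtFilter _ _) hd2cont.continuousAt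
  -- total energy functional is constant
  have key : ∀ s : ℝ, HasDerivAt (fun τ =>
      (1/2) * ((∫ x in D3, ∫ ξ, (∑ i, (ξ i) ^ 2) * f τ x ξ) +
          ∫ x in D3, (1 + ρ τ x) * ∑ i, (u τ x i) ^ 2) +
        (∫ σ in (0:ℝ)..τ, ∫ x in D3, ∑ i, ∑ j, (pd (fun y => u σ y i) j x) ^ 2) +
        (3/2) * (∫ σ in (0:ℝ)..τ, ∫ x in D3, ∫ ξ,
          (∑ i, (u σ x i - ξ i) ^ 2) * f σ x ξ)) 0 s := by
    intro s
    have H := ((((hA s).fun_add (hB s)).const_mul (1/2:ℝ)).fun_add (hC s)).fun_add ((hD s).const_mul (3/2:ℝ))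
    refine H.congr_deriv ?_
    rw [K1, K2, hd1eq, hd2]
    have := K3 s
    set M1 := ∫ z : X3 × X3, ((∑ i, (u s z.1 i)^2 + ∑ i, 4 * u s z.1 i * (z.2 i - u s z.1 i))
          * f s z.1 z.2) ∂μP
    set M2 := ∫ z : X3 × X3, ((∑ i, 2 * z.2 i * (u s z.1 i - z.2 i) - ∑ i, (z.2 i)^2)
          * f s z.1 z.2) ∂μP
    set M3 := ∫ z : X3 × X3, (∑ i, (u s z.1 i - z.2 i)^2) * f s z.1 z.2 ∂μP
    set Dd := ∫ x in D3, ∑ i, ∑ j,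
          (fderiv ℝ (fun r : ℝ × X3 => u r.1 r.2 i) (s, x) (0, Pi.single j 1))^2
    linarith
  intro t _
  have hdiffble : Differentiable ℝ _ := fun s => (key s).differentiableAt
  have hconst := is_const_of_deriv_eq_zero hdiffble (fun s => (key s).deriv) t 0
  simpa [intervalIntegral.integral_same] using hconst
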